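/- arXiv:1803.08011 — 3 statements merged into one kernel-verified Lean document; each statement's English description precedes it below -/
import Mathlib

section
/- There is an absolute constant c > 0 such that for every continuously differentiable function f : 𝕋 → ℝ with mean value f̄ = ∫_𝕋 f(x) dx, with f not constant, and whose set of critical points {x ∈ 𝕋 : f′(x) = 0} is finite, one has (#{x ∈ 𝕋 : f′(x) = 0}) · ‖f − f̄‖_{L²(𝕋)} ≥ c ‖f′‖²_{L¹(𝕋)} / ‖f′‖_{L^∞(𝕋)}. -/
/-!
Between consecutive critical points `f` is monotone, so `‖f'‖_{L¹}` is the sum of the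
oscillations `v_j` of `f` over the `n` arcs into which the critical points cut the circle.
Since `f` is `S`-Lipschitz with `S = ‖f'‖_∞`, on each arc it stays `v_j / 4` away from any
constant on a subinterval of length `v_j / (4S)`, so `v_j² ≤ 16 S ∫_arc |f - f̄|`.
Cauchy–Schwarz then gives `‖f'‖_{L¹}² ≤ n ∑ v_j² ≤ 16 S n ‖f - f̄‖_{L¹} ≤ 16 S n ‖f - f̄‖_{L²}`.
-/

open MeasureTheory Set Function NNReal

theorem Function.Periodic.of_hasDerivAt {f f' : ℝ → ℝ} {c : ℝ} (hper : Periodic f c)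
    (hd : ∀ x, HasDerivAt f (f' x) x) : Periodic f' c := fun x => by
  have h := (hd (x + c)).comp_add_const x c
  rw [show (fun y => f (y + c)) = f from funext hper] at h
  exact h.unique (hd x)

theorem Function.Periodic.exists_hasDerivAt_eq_zero {f f' : ℝ → ℝ} {c : ℝ}
    (hper : Periodic f c) (hc : 0 < c) (hd : ∀ x, HasDerivAt f (f' x) x) :
    ∃ x ∈ Ico 0 c, f' x = 0 := by
  have hf : Continuous f := continuous_iff_continuousAt.2 fun x => (hd x).continuousAt
  obtain ⟨_, ⟨z, rfl⟩, hmax⟩ :=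
    (hper.compact_of_continuous hc.ne' hf).exists_isGreatest (range_nonempty f)
  obtain ⟨x, hx, hfx⟩ := (hper.of_hasDerivAt hd).exists_mem_Ico₀ hc z
  exact ⟨x, hx, hfx ▸ IsLocalMax.hasDerivAt_eq_zero
    (Filter.Eventually.of_forall fun y => hmax ⟨y, rfl⟩) (hd z)⟩

theorem integral_abs_eq_abs_sub_of_hasDerivAt_of_ne_zero {f f' : ℝ → ℝ} {a b : ℝ}
    (hd : ∀ x, HasDerivAt f (f' x) x) (hc : Continuous f') (hab : a ≤ b)
    (hne : ∀ x ∈ Ioo a b, f' x ≠ 0) : ∫ x in a..b, |f' x| = |f b - f a| := by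
  have hf : Continuous f := continuous_iff_continuousAt.2 fun x => (hd x).continuousAt
  have hint : IntervalIntegrable (fun x => |f' x|) volume a b :=
    hc.abs.intervalIntegrable a b
  have hnonneg : 0 ≤ ∫ x in a..b, |f' x| :=
    intervalIntegral.integral_nonneg hab fun x _ => abs_nonneg _
  rcases isPreconnected_Ioo.mapsTo_Ioi_or_Iio hc.continuousOn hne with hpos | hneg
  · have h := intervalIntegral.integral_eq_sub_of_hasDerivAt_of_le hab hf.continuousOn
      (fun x hx => by rw [abs_of_pos (mem_Ioi.1 (hpos hx))]; exact hd x) hint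
    rw [h, abs_of_nonneg (h ▸ hnonneg)]
  · have h : ∫ x in a..b, |f' x| = f a - f b := by
      rw [intervalIntegral.integral_eq_sub_of_hasDerivAt_of_le hab hf.neg.continuousOn
        (fun x hx => by rw [abs_of_neg (mem_Iio.1 (hneg hx))]; exact (hd x).neg) hint]
      simp only [Pi.neg_apply]
      ring
    rw [h, abs_sub_comm, abs_of_nonneg (h ▸ hnonneg)]

theorem mul_le_integral_abs_sub_of_lipschitzWith {f : ℝ → ℝ} {K : ℝ≥0}
    (hf : LipschitzWith K f) {a b c m w : ℝ} (hab : a ≤ b) (hc : c ∈ Icc a b) (hw : w ≤ |f c - m|)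
    (hK : K * (b - a) ≤ w / 2) : w / 2 * (b - a) ≤ ∫ x in a..b, |f x - m| := by
  have hbound : ∀ x ∈ Icc a b, w / 2 ≤ |f x - m| := fun x hx => by
    have hcx : |f c - f x| ≤ K * (b - a) := by
      simpa only [Real.dist_eq] using
        (hf.dist_le_mul c x).trans (by gcongr; exact Real.dist_le_of_mem_Icc hc hx)
    linarith [abs_sub_le (f c) (f x) m]
  calc w / 2 * (b - a)
      = ∫ _ in a..b, w / 2 := by
        rw [intervalIntegral.integral_const, smul_eq_mul, mul_comm]
    _ ≤ ∫ x in a..b, |f x - m| := intervalIntegral.integral_mono_on hab intervalIntegrable_const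
      ((hf.continuous.sub continuous_const).abs.intervalIntegrable a b) hbound

theorem sq_sub_le_mul_integral_abs_sub {f : ℝ → ℝ} {K : ℝ≥0} (hf : LipschitzWith K f)
    {a b : ℝ} (hab : a ≤ b) (m : ℝ) :
    (f b - f a) ^ 2 ≤ 16 * K * ∫ x in a..b, |f x - m| := by
  have hL : 0 ≤ ∫ x in a..b, |f x - m| :=
    intervalIntegral.integral_nonneg hab fun x _ => abs_nonneg _
  set v := |f b - f a|
  rw [← sq_abs]
  rcases (abs_nonneg (f b - f a)).eq_or_lt with hv | hv
  · rw [← hv, zero_pow two_ne_zero]; exact mul_nonneg (by positivity) hL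
  have hvK : v ≤ K * (b - a) := by
    simpa only [Real.dist_eq, abs_of_nonneg (sub_nonneg.2 hab)] using hf.dist_le_mul b a
  have hK : (0 : ℝ) < K := pos_of_mul_pos_left (hv.trans_le hvK) (sub_nonneg.2 hab)
  -- `f a` or `f b` is `v / 2` away from `m`, so `f` stays `v / 4` away from `m` within `δ` of it
  set δ := v / (4 * K)
  have hδ : δ ≤ b - a := by
    rw [div_le_iff₀ (by positivity)]; nlinarith
  have hδ0 : 0 ≤ δ := by positivity
  have hKδ : K * δ = v / 4 := by simp only [δ]; field_simp
  have hmass : v ^ 2 = 16 * K * (v / 2 / 2 * δ) := by linear_combination (-4 * v) * hKδ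
  have hsplit : v ≤ |f b - m| + |f a - m| := by
    simpa only [sub_sub_sub_cancel_right] using abs_sub (f b - m) (f a - m)
  rw [hmass]
  gcongr
  have hmono : ∀ c d, a ≤ c → c ≤ d → d ≤ b →
      ∫ x in c..d, |f x - m| ≤ ∫ x in a..b, |f x - m| := fun c d hac hcd hdb =>
    intervalIntegral.integral_mono_interval hac hcd hdb
      (Filter.Eventually.of_forall fun x => abs_nonneg _)
      ((hf.continuous.sub continuous_const).abs.intervalIntegrable a b)
  rcases le_or_gt (v / 2) |f b - m| with hb | ha
  · calc v / 2 / 2 * δ = v / 2 / 2 * (b - (b - δ)) := by ring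
      _ ≤ ∫ x in (b - δ)..b, |f x - m| :=
        mul_le_integral_abs_sub_of_lipschitzWith hf (by linarith) ⟨by linarith, le_rfl⟩ hb
          (by rw [sub_sub_cancel, hKδ]; linarith)
      _ ≤ ∫ x in a..b, |f x - m| := hmono _ _ (by linarith) (by linarith) le_rfl
  · calc v / 2 / 2 * δ = v / 2 / 2 * (a + δ - a) := by ring
      _ ≤ ∫ x in a..(a + δ), |f x - m| :=
        mul_le_integral_abs_sub_of_lipschitzWith hf (by linarith) ⟨le_rfl, by linarith⟩
          (by linarith) (by rw [add_sub_cancel_left, hKδ]; linarith)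
      _ ≤ ∫ x in a..b, |f x - m| := hmono _ _ le_rfl (by linarith) (by linarith)

theorem add_sq_le_mul_add_mul {x y p q c A B : ℝ} (hp : 0 < p) (hq : 0 < q)
    (hx : x ^ 2 ≤ c * p * A) (hy : y ^ 2 ≤ c * q * B) :
    (x + y) ^ 2 ≤ c * (p + q) * (A + B) := by
  have hcs : (x + y) ^ 2 * (p * q) ≤ (p + q) * (q * x ^ 2 + p * y ^ 2) := by
    nlinarith [sq_nonneg (x * q - y * p)]
  have hxy : q * x ^ 2 + p * y ^ 2 ≤ p * q * (c * (A + B)) := by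
    nlinarith [mul_le_mul_of_nonneg_left hx hq.le, mul_le_mul_of_nonneg_left hy hp.le]
  refine le_of_mul_le_mul_right ?_ (mul_pos hp hq)
  nlinarith [mul_le_mul_of_nonneg_left hxy (add_pos hp hq).le]

theorem sq_integral_abs_deriv_le_of_finite_zeros {f f' : ℝ → ℝ} {K : ℝ≥0}
    (hd : ∀ x, HasDerivAt f (f' x) x) (hc : Continuous f') (hf : LipschitzWith K f) (m : ℝ)
    {a b : ℝ} (hab : a ≤ b) (hfin : {x ∈ Ioo a b | f' x = 0}.Finite) :
    (∫ x in a..b, |f' x|) ^ 2 ≤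
      16 * K * ({x ∈ Ioo a b | f' x = 0}.ncard + 1) * ∫ x in a..b, |f x - m| := by
  induction hn : {x ∈ Ioo a b | f' x = 0}.ncard using Nat.strong_induction_on
    generalizing a b with
  | _ n ih =>
  have hcont : Continuous fun x => |f x - m| := (hf.continuous.sub continuous_const).abs
  have hL : ∀ a b : ℝ, a ≤ b → 0 ≤ ∫ x in a..b, |f x - m| := fun a b hab =>
    intervalIntegral.integral_nonneg hab fun x _ => abs_nonneg _
  rcases eq_empty_or_nonempty {x ∈ Ioo a b | f' x = 0} with hZ | ⟨z, hz, hz0⟩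
  · have hne : ∀ x ∈ Ioo a b, f' x ≠ 0 := fun x hx h0 => hZ.subset ⟨hx, h0⟩
    rw [integral_abs_eq_abs_sub_of_hasDerivAt_of_ne_zero hd hc hab hne, sq_abs]
    calc (f b - f a) ^ 2 ≤ 16 * K * ∫ x in a..b, |f x - m| :=
          sq_sub_le_mul_integral_abs_sub hf hab m
      _ ≤ 16 * K * (n + 1) * ∫ x in a..b, |f x - m| := by
          refine mul_le_mul_of_nonneg_right (le_mul_of_one_le_right (by positivity) ?_)
            (hL a b hab)
          simp
  · set Z₁ := {x ∈ Ioo a z | f' x = 0}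
    set Z₂ := {x ∈ Ioo z b | f' x = 0}
    have hsub : Z₁ ∪ Z₂ ⊆ {x ∈ Ioo a b | f' x = 0} \ {z} := by
      rintro x (⟨hx, hx0⟩ | ⟨hx, hx0⟩)
      · exact ⟨⟨⟨hx.1, hx.2.trans hz.2⟩, hx0⟩, hx.2.ne⟩
      · exact ⟨⟨⟨hz.1.trans hx.1, hx.2⟩, hx0⟩, hx.1.ne'⟩
    have hdisj : Disjoint Z₁ Z₂ := disjoint_left.2 fun x h₁ h₂ => h₁.1.2.not_gt h₂.1.1
    have hfin₁ : Z₁.Finite := hfin.subset fun x hx => (hsub (.inl hx)).1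
    have hfin₂ : Z₂.Finite := hfin.subset fun x hx => (hsub (.inr hx)).1
    have hcard : Z₁.ncard + Z₂.ncard + 1 ≤ n := by
      rw [← ncard_union_eq hdisj hfin₁ hfin₂, ← hn,
        ← ncard_sdiff_singleton_add_one (show z ∈ {x ∈ Ioo a b | f' x = 0} from ⟨hz, hz0⟩) hfin]
      exact Nat.add_le_add_right (ncard_le_ncard hsub hfin.sdiff) 1
    have h₁ := ih Z₁.ncard (by omega) hz.1.le hfin₁ rfl
    have h₂ := ih Z₂.ncard (by omega) hz.2.le hfin₂ rfl
    rw [← intervalIntegral.integral_add_adjacent_intervals (hc.abs.intervalIntegrable a z)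
        (hc.abs.intervalIntegrable z b),
      ← intervalIntegral.integral_add_adjacent_intervals
        (hcont.intervalIntegrable a z) (hcont.intervalIntegrable z b)]
    refine (add_sq_le_mul_add_mul (by positivity) (by positivity) h₁ h₂).trans ?_
    refine mul_le_mul_of_nonneg_right (mul_le_mul_of_nonneg_left ?_ (by positivity))
      (add_nonneg (hL a z hz.1.le) (hL z b hz.2.le))
    exact_mod_cast (by omega : Z₁.ncard + 1 + (Z₂.ncard + 1) ≤ n + 1)

theorem Function.Periodic.setOf_mem_Ioo_eq_sdiff_of_isLeast {g : ℝ → ℝ} {c z : ℝ}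
    (hper : Periodic g c) (hz : IsLeast {x ∈ Ico 0 c | g x = 0} z) :
    {x ∈ Ioo z (z + c) | g x = 0} = {x ∈ Ico 0 c | g x = 0} \ {z} := by
  obtain ⟨⟨⟨hz0, hzc⟩, -⟩, hzmin⟩ := hz
  ext x
  constructor
  · rintro ⟨⟨hzx, hxz⟩, hx⟩
    refine ⟨⟨⟨hz0.trans hzx.le, ?_⟩, hx⟩, hzx.ne'⟩
    by_contra! hcx
    -- otherwise `x - c` would be a zero in `[0, z)`
    have := hzmin ⟨⟨by linarith, by linarith⟩, (hper.sub_eq x).trans hx⟩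
    linarith
  · rintro ⟨⟨⟨hx0, hxc⟩, hx⟩, hxz⟩
    exact ⟨⟨(hzmin ⟨⟨hx0, hxc⟩, hx⟩).lt_of_ne (Ne.symm hxz), by linarith⟩, hx⟩

theorem Function.Periodic.sq_integral_abs_deriv_le {f f' : ℝ → ℝ} {K : ℝ≥0}
    (hper : Periodic f 1) (hd : ∀ x, HasDerivAt f (f' x) x) (hc : Continuous f')
    (hf : LipschitzWith K f) (m : ℝ) (hfin : {x ∈ Ico (0 : ℝ) 1 | f' x = 0}.Finite) :
    (∫ x in (0 : ℝ)..1, |f' x|) ^ 2 ≤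
      16 * K * {x ∈ Ico (0 : ℝ) 1 | f' x = 0}.ncard * ∫ x in (0 : ℝ)..1, |f x - m| := by
  have hper' := hper.of_hasDerivAt hd
  obtain ⟨z, hzK, hzmin⟩ :=
    exists_min_image _ id hfin (hper.exists_hasDerivAt_eq_zero one_pos hd)
  -- cutting the circle at the first critical point `z` leaves the other ones inside `(z, z + 1)`
  have hZ := hper'.setOf_mem_Ioo_eq_sdiff_of_isLeast ⟨hzK, fun y hy => hzmin y hy⟩
  have hV : ∫ x in z..z + 1, |f' x| = ∫ x in (0 : ℝ)..1, |f' x| := by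
    simpa using (hper'.comp fun y => |y|).intervalIntegral_add_eq z 0
  have hL : ∫ x in z..z + 1, |f x - m| = ∫ x in (0 : ℝ)..1, |f x - m| := by
    simpa using (hper.comp fun y => |y - m|).intervalIntegral_add_eq z 0
  have h := sq_integral_abs_deriv_le_of_finite_zeros hd hc hf m (by linarith : z ≤ z + 1)
    (hZ ▸ hfin.sdiff)
  rwa [hZ, ← Nat.cast_add_one, ncard_sdiff_singleton_add_one hzK hfin, hV, hL] at h

theorem sq_intervalIntegral_le_intervalIntegral_sq {g : ℝ → ℝ} (hg : Continuous g) :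
    (∫ x in (0 : ℝ)..1, g x) ^ 2 ≤ ∫ x in (0 : ℝ)..1, g x ^ 2 := by
  set L := ∫ x in (0 : ℝ)..1, g x
  have h : ∫ x in (0 : ℝ)..1, 2 * L * g x ≤ ∫ x in (0 : ℝ)..1, (L ^ 2 + g x ^ 2) :=
    intervalIntegral.integral_mono_on zero_le_one
      ((hg.intervalIntegrable 0 1).const_mul (2 * L))
      ((continuous_const.add (hg.pow 2)).intervalIntegrable 0 1)
      fun x _ => two_mul_le_add_sq L (g x)
  rw [intervalIntegral.integral_const_mul, intervalIntegral.integral_add (g := fun x => g x ^ 2)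
    intervalIntegrable_const ((hg.pow 2).intervalIntegrable 0 1),
    intervalIntegral.integral_const] at h
  simp only [sub_zero, smul_eq_mul, one_mul] at h
  linarith

/-- Corollary of Theorem 4: for a continuously differentiable, non-constant,
1-periodic function `f : ℝ → ℝ` (a `C¹` function on the torus) with mean value `f̄`
and finitely many critical points in a period,
`(#critical points) · ‖f - f̄‖_{L²} ≥ c ‖f'‖_{L¹}² / ‖f'‖_{L^∞}`. -/
theorem stmt6 : ∃ c : ℝ, 0 < c ∧
    ∀ f f' : ℝ → ℝ, (∀ x, HasDerivAt f (f' x) x) → Continuous f' →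
      Function.Periodic f 1 → (∃ x y, f x ≠ f y) →
      {x ∈ Set.Ico (0 : ℝ) 1 | f' x = 0}.Finite →
      c * (∫ x in (0:ℝ)..1, |f' x|) ^ 2 / (⨆ x, |f' x|) ≤
        ({x ∈ Set.Ico (0 : ℝ) 1 | f' x = 0}.ncard : ℝ) *
          Real.sqrt (∫ x in (0:ℝ)..1, (f x - ∫ y in (0:ℝ)..1, f y) ^ 2) := by
  refine ⟨1 / 16, by norm_num, fun f f' hd hc hper _ hfin => ?_⟩
  have hbdd : BddAbove (range fun x => |f' x|) :=
    (((hper.of_hasDerivAt hd).comp fun y => |y|).compact_of_continuous one_ne_zero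
      hc.abs).bddAbove
  set S := ⨆ x, |f' x|
  have hS : ∀ x, |f' x| ≤ S := le_ciSup hbdd
  have hS0 : 0 ≤ S := (abs_nonneg _).trans (hS 0)
  have hf : LipschitzWith S.toNNReal f :=
    lipschitzWith_of_nnnorm_deriv_le (fun x => (hd x).differentiableAt) fun x => by
      rw [(hd x).deriv, ← NNReal.coe_le_coe, coe_nnnorm, Real.coe_toNNReal _ hS0]; exact hS x
  set m := ∫ y in (0 : ℝ)..1, f y
  have hV := hper.sq_integral_abs_deriv_le hd hc hf m hfin
  have hL : ∫ x in (0 : ℝ)..1, |f x - m| ≤ √(∫ x in (0 : ℝ)..1, (f x - m) ^ 2) :=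
    Real.le_sqrt_of_sq_le <| by
      simpa only [sq_abs] using
        sq_intervalIntegral_le_intervalIntegral_sq (g := fun x => |f x - m|)
          (hf.continuous.sub continuous_const).abs
  rw [Real.coe_toNNReal _ hS0] at hV
  refine div_le_of_le_mul₀ hS0 (by positivity) ?_
  calc 1 / 16 * (∫ x in (0 : ℝ)..1, |f' x|) ^ 2
      ≤ {x ∈ Ico (0 : ℝ) 1 | f' x = 0}.ncard * (∫ x in (0 : ℝ)..1, |f x - m|) * S := by linarith
    _ ≤ _ := by gcongr
end

section
/- There is an absolute constant c > 0 such that for every continuous function f : 𝕋 → ℝ with f ≥ 0, not identically 0 and not constant, with mean value f̄ = ∫_𝕋 f(x) dx, and such that the level set {x ∈ 𝕋 : f(x) = f̄} is finite, one has (#{x ∈ 𝕋 : f(x) = f̄}) · W₁(f dx, f̄ dx) ≥ c ‖f − f̄‖²_{L¹(𝕋)} / ‖f‖_{L^∞(𝕋)}. -/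
open MeasureTheory
open scoped ENNReal

/-- The `p`-Wasserstein distance between measures on the torus `𝕋 = ℝ/ℤ`,
defined as the infimum of `(∫ |x-y|^p dγ)^(1/p)` over all couplings `γ`. -/
noncomputable def Wdist (p : ℝ) (μ ν : Measure UnitAddCircle) : ℝ :=
  sInf { c : ℝ | ∃ γ : Measure (UnitAddCircle × UnitAddCircle),
      γ.map Prod.fst = μ ∧ γ.map Prod.snd = ν ∧
      c = (∫ z, dist z.1 z.2 ^ p ∂γ) ^ (1 / p) }

/-!
Put `g = f - f̄` and `Z = {g = 0}`; `Z` is nonempty because `g` has mean zero. On the circle a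
point where `g > 0` and a point where `g < 0` are joined by a shortest arc, which meets `Z`; hence
the distance to `Z`, signed by `g`, is `1`-Lipschitz, and tested against any coupling it gives
`W₁(f dx, f̄ dx) ≥ ∫ |g| · dist(·, Z)`. The set `{dist(·, Z) < T}` is covered by `#Z` arcs of
length `2T`, on which `|g| ≤ ‖f‖_∞`; with `T = ‖g‖₁ / (4 ‖f‖_∞ #Z)` at least half of `‖g‖₁`
lives where `dist(·, Z) ≥ T`, so `∫ |g| · dist(·, Z) ≥ ‖g‖₁² / (8 ‖f‖_∞ #Z)`.
-/

open Metric Set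

section SignedInfDist

variable {X : Type*} [PseudoMetricSpace X]

noncomputable def signedInfDist (g : X → ℝ) (x : X) : ℝ :=
  SignType.sign (g x) * infDist x {y | g y = 0}

theorem mul_signedInfDist (g : X → ℝ) (x : X) :
    g x * signedInfDist g x = |g x| * infDist x {y | g y = 0} := by
  rw [signedInfDist, ← mul_assoc, mul_comm (g x), sign_mul_self]

theorem lipschitzWith_signedInfDist {g : X → ℝ}
    (hg : ∀ x y, 0 < g x → g y < 0 → ∃ z, g z = 0 ∧ dist x z + dist z y ≤ dist x y) :
    LipschitzWith 1 (signedInfDist g) := by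
  refine LipschitzWith.of_le_add_mul 1 fun x y => ?_
  set Z := {y | g y = 0}
  have hx₀ := infDist_nonneg (x := x) (s := Z)
  have hy₀ := infDist_nonneg (x := y) (s := Z)
  have hxy := infDist_le_infDist_add_dist (x := x) (y := y) (s := Z)
  have hyx := infDist_le_infDist_add_dist (x := y) (y := x) (s := Z)
  rw [dist_comm] at hyx
  simp only [signedInfDist, NNReal.coe_one, one_mul]
  rcases lt_trichotomy (g x) 0 with hx | hx | hx <;>
    rcases lt_trichotomy (g y) 0 with hy | hy | hy <;>
    simp only [sign_neg, sign_pos, sign_zero, hx, hy, SignType.coe_neg, SignType.coe_one,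
      SignType.coe_zero, zero_mul, one_mul, neg_one_mul] <;>
    try linarith [dist_nonneg (x := x) (y := y)]
  · linarith [infDist_le_dist_of_mem (x := y) (show x ∈ Z from hx), dist_comm x y]
  · obtain ⟨z, hz, hxzy⟩ := hg x y hx hy
    linarith [infDist_le_dist_of_mem (x := x) (show z ∈ Z from hz),
      infDist_le_dist_of_mem (x := y) (show z ∈ Z from hz), dist_comm y z]
  · linarith [infDist_le_dist_of_mem (x := x) (show y ∈ Z from hy)]

end SignedInfDist

theorem Continuous.exists_eq_integral {X : Type*} [TopologicalSpace X] [CompactSpace X]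
    [PreconnectedSpace X] [MeasurableSpace X] [OpensMeasurableSpace X] {μ : Measure X}
    [IsProbabilityMeasure μ] {f : X → ℝ} (hf : Continuous f) : ∃ x, f x = ∫ y, f y ∂μ := by
  have : Nonempty X := nonempty_of_isProbabilityMeasure μ
  obtain ⟨a, -, ha⟩ := isCompact_univ.exists_isMinOn univ_nonempty hf.continuousOn
  obtain ⟨b, -, hb⟩ := isCompact_univ.exists_isMaxOn univ_nonempty hf.continuousOn
  have hfi := hf.integrable_of_hasCompactSupport (HasCompactSupport.of_compactSpace f) (μ := μ)
  have hle : f a ≤ ∫ y, f y ∂μ := by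
    simpa using integral_mono (integrable_const (f a)) hfi fun y => ha (mem_univ y)
  have hge : ∫ y, f y ∂μ ≤ f b := by
    simpa using integral_mono hfi (integrable_const (f b)) fun y => hb (mem_univ y)
  exact intermediate_value_univ a b hf ⟨hle, hge⟩

theorem MeasureTheory.Measure.exists_coupling {α β : Type*} [MeasurableSpace α]
    [MeasurableSpace β] (μ : Measure α) (ν : Measure β) [IsFiniteMeasure μ] [IsFiniteMeasure ν]
    (h : μ univ = ν univ) : ∃ γ : Measure (α × β), γ.map Prod.fst = μ ∧ γ.map Prod.snd = ν := by
  rcases eq_zero_or_neZero μ with rfl | hμ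
  · refine ⟨0, by simp, ?_⟩
    rw [Measure.coe_zero, Pi.zero_apply, eq_comm, Measure.measure_univ_eq_zero] at h
    simp [h]
  refine ⟨(μ univ)⁻¹ • μ.prod ν, ?_, ?_⟩
  · rw [Measure.map_smul, Measure.map_fst_prod, smul_smul, ← h,
      ENNReal.inv_mul_cancel (NeZero.ne _) (measure_ne_top _ _), one_smul]
  · rw [Measure.map_smul, Measure.map_snd_prod, smul_smul,
      ENNReal.inv_mul_cancel (NeZero.ne _) (measure_ne_top _ _), one_smul]

theorem integral_sub_integral_le_integral_dist {X : Type*} [PseudoMetricSpace X] [CompactSpace X]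
    [MeasurableSpace X] [BorelSpace X] {γ : Measure (X × X)} [IsFiniteMeasure γ] {φ : X → ℝ}
    (hφ : LipschitzWith 1 φ) :
    ∫ x, φ x ∂γ.map Prod.fst - ∫ x, φ x ∂γ.map Prod.snd ≤ ∫ z, dist z.1 z.2 ∂γ := by
  have hφc := hφ.continuous
  have hint : ∀ {F : X × X → ℝ}, Continuous F → Integrable F γ := fun hF =>
    hF.integrable_of_hasCompactSupport (HasCompactSupport.of_compactSpace _)
  rw [integral_map measurable_fst.aemeasurable hφc.aestronglyMeasurable,
    integral_map measurable_snd.aemeasurable hφc.aestronglyMeasurable,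
    ← integral_sub (hint (by fun_prop)) (hint (by fun_prop))]
  refine integral_mono ((hint (by fun_prop)).sub (hint (by fun_prop))) (hint continuous_dist)
    fun z => (le_abs_self _).trans ?_
  simpa [Real.dist_eq] using hφ.dist_le_mul z.1 z.2

theorem integral_withDensity_ofReal {X : Type*} [MeasurableSpace X] {μ : Measure X} {f : X → ℝ}
    (hf : Measurable f) (hf₀ : ∀ x, 0 ≤ f x) (φ : X → ℝ) :
    ∫ x, φ x ∂μ.withDensity (fun x => ENNReal.ofReal (f x)) = ∫ x, f x * φ x ∂μ := by
  rw [integral_withDensity_eq_integral_toReal_smul hf.ennreal_ofReal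
    (ae_of_all _ fun _ => ENNReal.ofReal_lt_top)]
  simp [ENNReal.toReal_ofReal (hf₀ _)]

theorem mul_sub_measureReal_le_integral_mul {X : Type*} [MeasurableSpace X] {μ : Measure X}
    [IsFiniteMeasure μ] {h D : X → ℝ} {M T : ℝ} (hh : Integrable h μ)
    (hhD : Integrable (fun x => h x * D x) μ) (hD : Measurable D) (hh₀ : ∀ x, 0 ≤ h x)
    (hhM : ∀ x, h x ≤ M) (hD₀ : ∀ x, 0 ≤ D x) (hT : 0 ≤ T) :
    T * (∫ x, h x ∂μ - M * μ.real {x | D x < T}) ≤ ∫ x, h x * D x ∂μ := by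
  set S := {x | D x < T}
  have hS : MeasurableSet S := measurableSet_lt hD measurable_const
  have hind : Integrable (S.indicator 1) μ := (integrable_const (1 : ℝ)).indicator hS
  calc T * (∫ x, h x ∂μ - M * μ.real S)
      = ∫ x, (T * h x - T * M * S.indicator 1 x) ∂μ := by
        rw [integral_sub (hh.const_mul T) (hind.const_mul (T * M)), integral_const_mul,
          integral_const_mul, integral_indicator_one hS]
        ring
    _ ≤ ∫ x, h x * D x ∂μ := by
        refine integral_mono ((hh.const_mul T).sub (hind.const_mul (T * M))) hhD fun x => ?_
        have := hh₀ x
        by_cases hx : x ∈ S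
        · have := hhM x; have := hD₀ x
          simp only [indicator_of_mem hx, Pi.one_apply, mul_one]
          nlinarith
        · have hTD : T ≤ D x := not_lt.1 hx
          simp only [indicator_of_notMem hx, mul_zero, sub_zero]
          nlinarith

namespace AddCircle

variable {p : ℝ}

theorem dist_coe_le (a b : ℝ) : dist (a : AddCircle p) b ≤ |a - b| := by
  rw [dist_eq_norm, ← QuotientAddGroup.mk_sub]
  simpa using QuotientAddGroup.norm_mk_le_norm (S := AddSubgroup.zmultiples p) (m := a - b)

theorem exists_eq_add_abs_eq_dist (x y : AddCircle p) :
    ∃ r : ℝ, y = x + r ∧ |r| = dist x y := by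
  obtain ⟨s, hs⟩ := QuotientAddGroup.mk_surjective (y - x)
  refine ⟨s - round (p⁻¹ * s) * p, ?_, ?_⟩
  · rw [QuotientAddGroup.mk_sub, hs, ← zsmul_eq_mul, QuotientAddGroup.mk_zsmul, coe_period,
      smul_zero, sub_zero]
    abel
  · rw [dist_comm, dist_eq_norm, ← hs, norm_eq]

theorem exists_zero_dist_add_dist_le {g : AddCircle p → ℝ} (hg : Continuous g)
    {x y : AddCircle p} (hx : 0 ≤ g x) (hy : g y ≤ 0) :
    ∃ z, g z = 0 ∧ dist x z + dist z y ≤ dist x y := by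
  obtain ⟨r, rfl, hr⟩ := exists_eq_add_abs_eq_dist x y
  have hc : ContinuousOn (fun t : ℝ => g (x + ↑(t * r))) (Icc 0 1) := by fun_prop
  obtain ⟨t, ⟨ht₀, ht₁⟩, hzero⟩ :=
    intermediate_value_Icc' zero_le_one hc ⟨by simpa using hy, by simpa using hx⟩
  refine ⟨x + ↑(t * r), hzero, ?_⟩
  have h₁ : dist x (x + ↑(t * r)) ≤ t * |r| := by
    simpa [abs_mul, abs_of_nonneg ht₀] using dist_coe_le (p := p) 0 (t * r)
  have h₂ : dist (x + ↑(t * r)) (x + ↑r) ≤ (1 - t) * |r| := by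
    rw [dist_add_left, ← abs_of_nonneg (sub_nonneg.2 ht₁), ← abs_mul, ← abs_neg]
    exact (dist_coe_le _ _).trans_eq (by ring_nf)
  rw [← hr]
  nlinarith

variable [Fact (0 < p)]

theorem measureReal_setOf_infDist_lt_le {Z : Set (AddCircle p)} (hZ : Z.Finite)
    (hZne : Z.Nonempty) {T : ℝ} (hT : 0 ≤ T) :
    volume.real {x | infDist x Z < T} ≤ Z.ncard * (2 * T) := by
  have hcover : {x | infDist x Z < T} ⊆ ⋃ z ∈ hZ.toFinset, closedBall z T := by
    intro x hx
    obtain ⟨z, hz, hxz⟩ := (infDist_lt_iff hZne).1 hx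
    exact mem_biUnion (hZ.mem_toFinset.2 hz) (mem_closedBall.2 hxz.le)
  calc volume.real {x | infDist x Z < T}
      ≤ ∑ z ∈ hZ.toFinset, volume.real (closedBall z T) :=
        (measureReal_mono hcover (measure_ne_top _ _)).trans (measureReal_biUnion_finset_le _ _)
    _ ≤ ∑ _z ∈ hZ.toFinset, 2 * T := by
        refine Finset.sum_le_sum fun z _ => ?_
        rw [measureReal_def, volume_closedBall,
          ENNReal.toReal_ofReal (le_min (Fact.out : 0 < p).le (by positivity))]
        exact min_le_right _ _
    _ = Z.ncard * (2 * T) := by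
        rw [Finset.sum_const, nsmul_eq_mul, ncard_eq_toFinset_card Z hZ]

theorem sq_integral_abs_div_le_integral_abs_mul_infDist {g : AddCircle p → ℝ}
    (hg : Continuous g) {M : ℝ} (hM : 0 < M) (hgM : ∀ x, |g x| ≤ M) {Z : Set (AddCircle p)}
    (hZ : Z.Finite) (hZne : Z.Nonempty) :
    (∫ x, |g x|) ^ 2 / (8 * M * Z.ncard) ≤ ∫ x, |g x| * infDist x Z := by
  set a := ∫ x, |g x|
  set n : ℝ := (Z.ncard : ℝ)
  have hn : 0 < n := Nat.cast_pos.2 ((ncard_pos hZ).2 hZne)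
  have ha : 0 ≤ a := integral_nonneg fun x => abs_nonneg (g x)
  have hD : Continuous fun x => infDist x Z := continuous_infDist_pt Z
  set T := a / (4 * M * n)
  have hT : 0 ≤ T := by positivity
  calc a ^ 2 / (8 * M * n) = T * (a - M * (n * (2 * T))) := by
        simp only [T]; field_simp; ring
    _ ≤ T * (a - M * volume.real {x | infDist x Z < T}) := by
        gcongr; exact measureReal_setOf_infDist_lt_le hZ hZne hT
    _ ≤ ∫ x, |g x| * infDist x Z :=
        mul_sub_measureReal_le_integral_mul
          (hg.abs.integrable_of_hasCompactSupport (HasCompactSupport.of_compactSpace _))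
          ((hg.abs.mul hD).integrable_of_hasCompactSupport (HasCompactSupport.of_compactSpace _))
          hD.measurable (fun x => abs_nonneg _) hgM (fun x => infDist_nonneg) hT

end AddCircle

instance : IsProbabilityMeasure (volume : Measure UnitAddCircle) := ⟨UnitAddCircle.measure_univ⟩

theorem integral_sub_integral_le_Wdist_one {μ ν : Measure UnitAddCircle} [IsFiniteMeasure μ]
    (h : μ univ = ν univ) {φ : UnitAddCircle → ℝ} (hφ : LipschitzWith 1 φ) :
    ∫ x, φ x ∂μ - ∫ x, φ x ∂ν ≤ Wdist 1 μ ν := by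
  have : IsFiniteMeasure ν := ⟨h ▸ measure_lt_top μ univ⟩
  obtain ⟨γ₀, h₁, h₂⟩ := Measure.exists_coupling μ ν h
  refine le_csInf ⟨_, γ₀, h₁, h₂, rfl⟩ ?_
  rintro _ ⟨γ, rfl, rfl, rfl⟩
  have : IsFiniteMeasure γ := Measure.isFiniteMeasure_of_map measurable_fst.aemeasurable
  simpa using integral_sub_integral_le_integral_dist hφ

theorem integral_abs_sub_mul_infDist_le_Wdist_one {f : UnitAddCircle → ℝ} (hf : Continuous f)
    (hf₀ : ∀ x, 0 ≤ f x) :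
    ∫ x, |f x - ∫ y, f y| * infDist x {y | f y = ∫ y, f y} ≤
      Wdist 1 (volume.withDensity fun x => ENNReal.ofReal (f x))
        (volume.withDensity fun _ => ENNReal.ofReal (∫ x, f x)) := by
  set c := ∫ y, f y
  set g := fun x => f x - c
  have hc : 0 ≤ c := integral_nonneg hf₀
  have hint : ∀ {F : UnitAddCircle → ℝ}, Continuous F → Integrable F volume := fun hF =>
    hF.integrable_of_hasCompactSupport (HasCompactSupport.of_compactSpace _)
  have hmass : (volume.withDensity fun x => ENNReal.ofReal (f x)) univ =
      (volume.withDensity fun _ : UnitAddCircle => ENNReal.ofReal c) univ := by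
    rw [withDensity_apply _ MeasurableSet.univ, withDensity_apply _ MeasurableSet.univ,
      setLIntegral_univ, setLIntegral_univ, lintegral_const, measure_univ, mul_one,
      ← ofReal_integral_eq_lintegral_ofReal (hint hf) (ae_of_all _ hf₀)]
  have : IsFiniteMeasure (volume.withDensity fun x => ENNReal.ofReal (f x)) :=
    isFiniteMeasure_withDensity_ofReal (hint hf).hasFiniteIntegral
  have hφ : LipschitzWith 1 (signedInfDist g) := lipschitzWith_signedInfDist fun x y hx hy =>
    AddCircle.exists_zero_dist_add_dist_le (hf.sub continuous_const) hx.le hy.le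
  have hZ : {y | g y = 0} = {y | f y = c} := by ext; simp [g, sub_eq_zero]
  refine le_of_eq_of_le ?_ (integral_sub_integral_le_Wdist_one hmass hφ)
  rw [integral_withDensity_ofReal hf.measurable hf₀, integral_withDensity_ofReal measurable_const
    (fun _ => hc), ← integral_sub (hint (F := fun x => f x * _) (hf.mul hφ.continuous))
      (hint (F := fun x => c * _) (continuous_const.mul hφ.continuous))]
  congr 1 with x
  rw [← sub_mul, ← hZ]
  exact (mul_signedInfDist g x).symm

/-- The strengthened form of Theorem 4: for continuous `f ≥ 0` on `𝕋`, not
identically `0` and not constant, with mean `f̄` and finite level set `{f = f̄}`,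
`#{x : f(x) = f̄} · W₁(f dx, f̄ dx) ≥ c ‖f - f̄‖₁² / ‖f‖_∞`. -/
theorem stmt7 : ∃ c : ℝ, 0 < c ∧
    ∀ f : UnitAddCircle → ℝ, Continuous f → (∀ x, 0 ≤ f x) → (∃ x, f x ≠ 0) →
      (∃ x y, f x ≠ f y) →
      {x : UnitAddCircle | f x = ∫ y, f y}.Finite →
      c * (∫ x, |f x - ∫ y, f y|) ^ 2 / (⨆ x, |f x|) ≤
        ({x : UnitAddCircle | f x = ∫ y, f y}.ncard : ℝ) *
          Wdist 1 (volume.withDensity fun x => ENNReal.ofReal (f x))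
            (volume.withDensity fun _ => ENNReal.ofReal (∫ x, f x)) := by
  refine ⟨1 / 8, by norm_num, fun f hf hf₀ ⟨x₁, hx₁⟩ _ hfin => ?_⟩
  set Z := {x | f x = ∫ y, f y}
  set M := ⨆ x, |f x|
  have hfM : ∀ x, |f x| ≤ M := le_ciSup (isCompact_range hf.abs).bddAbove
  have hM : 0 < M := (abs_pos.2 hx₁).trans_le (hfM x₁)
  obtain ⟨x₀, hx₀⟩ := hf.exists_eq_integral (μ := volume)
  have hgM : ∀ x, |f x - ∫ y, f y| ≤ M := fun x =>
    abs_sub_le_of_nonneg_of_le (hf₀ x) (le_of_abs_le (hfM x)) (hx₀ ▸ hf₀ x₀)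
      (hx₀ ▸ le_of_abs_le (hfM x₀))
  have hn : 0 < (Z.ncard : ℝ) := Nat.cast_pos.2 ((ncard_pos hfin).2 ⟨x₀, hx₀⟩)
  have key := (AddCircle.sq_integral_abs_div_le_integral_abs_mul_infDist
    (g := fun x => f x - ∫ y, f y) (hf.sub continuous_const) hM hgM hfin ⟨x₀, hx₀⟩).trans
    (integral_abs_sub_mul_infDist_le_Wdist_one hf hf₀)
  calc 1 / 8 * (∫ x, |f x - ∫ y, f y|) ^ 2 / M
      = Z.ncard * ((∫ x, |f x - ∫ y, f y|) ^ 2 / (8 * M * Z.ncard)) := by field_simp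
    _ ≤ _ := by gcongr
end

section
/- There is an absolute constant c > 0 with the following property. Let f : 𝕋 → ℝ be continuous with f ≥ 0, not identically 0, with mean value f̄ = ∫_𝕋 f(x) dx, and let T : 𝕋 → 𝕋 be a Borel map whose pushforward of f dx is f̄ dx. Then for every arc (interval) J ⊆ 𝕋 with ∫_J f(y) dy ≥ f̄ |J|, one has ∫_J |T(y) − y| f(y) dy ≥ c ( ∫_J f(y) dy − f̄ |J| )² / ‖f‖_{L^∞(𝕋)}. -/
/-!
Let `μ = f dx`, let `E` be the mass excess of `J = [a, b)` and `s = E / (8 ‖f‖∞)`. A point of `J`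
is either sent back into `J` (total mass at most `f̄ |J|`, since `T_* μ = f̄ dx`), or leaves `J`
moving less than `s`, hence lies within `s` of an endpoint of `J` (total mass at most
`4 ‖f‖∞ s = E / 2`), or is moved by at least `s`. So mass at least `E / 2` travels at least `s`,
and Markov's inequality bounds the cost below by `s E / 2 = E² / (16 ‖f‖∞)`.
-/

open MeasureTheory Set Metric

section WithDensity

variable {α : Type*} [MeasurableSpace α] {ν : Measure α} {f : α → ℝ}

theorem measureReal_withDensity_ofReal_le [IsFiniteMeasure ν] {M : ℝ} (hM : 0 ≤ M)
    (hf : ∀ x, f x ≤ M) (s : Set α) :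
    (ν.withDensity fun x => ENNReal.ofReal (f x)).real s ≤ M * ν.real s := by
  have hle : ν.withDensity (fun x => ENNReal.ofReal (f x)) ≤ ENNReal.ofReal M • ν := by
    rw [← withDensity_const]
    exact withDensity_mono (Filter.Eventually.of_forall fun x => ENNReal.ofReal_le_ofReal (hf x))
  calc _ ≤ (ENNReal.ofReal M • ν).real s :=
        ENNReal.toReal_mono (by simp [ENNReal.mul_eq_top, measure_ne_top]) (hle s)
    _ = M * ν.real s := by simp [ENNReal.toReal_ofReal hM]

theorem measureReal_withDensity_ofReal [SFinite ν] {s : Set α} (hf : IntegrableOn f s ν)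
    (hf0 : 0 ≤ᵐ[ν.restrict s] f) :
    (ν.withDensity fun x => ENNReal.ofReal (f x)).real s = ∫ x in s, f x ∂ν := by
  rw [measureReal_def, withDensity_apply', ← ofReal_integral_eq_lintegral_ofReal hf hf0,
    ENNReal.toReal_ofReal (integral_nonneg_of_ae hf0)]

theorem setIntegral_withDensity_ofReal [SFinite ν] (hf : Measurable f) (hf0 : ∀ x, 0 ≤ f x)
    (g : α → ℝ) (s : Set α) :
    ∫ x in s, g x ∂(ν.withDensity fun x => ENNReal.ofReal (f x)) = ∫ x in s, g x * f x ∂ν := by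
  rw [restrict_withDensity', integral_withDensity_eq_integral_toReal_smul hf.ennreal_ofReal
    (Filter.Eventually.of_forall fun _ => ENNReal.ofReal_lt_top)]
  simp only [ENNReal.toReal_ofReal (hf0 _), smul_eq_mul, mul_comm]

end WithDensity

theorem measureReal_preimage_le_of_map_eq_withDensity_const {α β : Type*} [MeasurableSpace α]
    [MeasurableSpace β] {μ : Measure α} {ν : Measure β} [IsFiniteMeasure ν] {T : α → β}
    (hT : Measurable T) {F : ℝ} (hF : 0 ≤ F)
    (hmap : μ.map T = ν.withDensity fun _ => ENNReal.ofReal F) (s : Set β) :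
    μ.real (T ⁻¹' s) ≤ F * ν.real s := by
  have hle := Measure.le_map_apply (μ := μ) hT.aemeasurable s
  rw [hmap, withDensity_const] at hle
  calc μ.real (T ⁻¹' s) ≤ (ENNReal.ofReal F • ν).real s :=
        ENNReal.toReal_mono (by simp [ENNReal.mul_eq_top, measure_ne_top]) hle
    _ = F * ν.real s := by simp [ENNReal.toReal_ofReal hF]

theorem mul_measureReal_sub_preimage_sub_le_setIntegral {α : Type*} [MeasurableSpace α]
    {μ : Measure α} [IsFiniteMeasure μ] {T : α → α} {c : α → ℝ} {J B : Set α} {s : ℝ}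
    (hs : 0 ≤ s) (hc0 : 0 ≤ᵐ[μ.restrict J] c) (hc : IntegrableOn c J μ)
    (hB : ∀ y ∈ J, T y ∉ J → c y < s → y ∈ B) :
    s * (μ.real J - μ.real (T ⁻¹' J) - μ.real B) ≤ ∫ y in J, c y ∂μ := by
  set A := {y | s ≤ c y} ∩ J
  have hcover : J ⊆ A ∪ T ⁻¹' J ∪ B := by
    intro y hy
    by_cases hTy : T y ∈ J
    · exact Or.inl (Or.inr hTy)
    by_cases hcy : s ≤ c y
    · exact Or.inl (Or.inl ⟨hcy, hy⟩)
    · exact Or.inr (hB y hy hTy (not_le.mp hcy))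
  have hJ : μ.real J ≤ μ.real A + μ.real (T ⁻¹' J) + μ.real B :=
    calc μ.real J ≤ μ.real (A ∪ T ⁻¹' J ∪ B) := measureReal_mono hcover
      _ ≤ μ.real (A ∪ T ⁻¹' J) + μ.real B := measureReal_union_le _ _
      _ ≤ _ := by gcongr; exact measureReal_union_le _ _
  have hA : μ.real A ≤ (μ.restrict J).real {y | s ≤ c y} :=
    ENNReal.toReal_mono (measure_ne_top _ _) (Measure.le_restrict_apply _ _)
  calc s * (μ.real J - μ.real (T ⁻¹' J) - μ.real B) ≤ s * (μ.restrict J).real {y | s ≤ c y} := by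
        gcongr; linarith
    _ ≤ ∫ y in J, c y ∂μ := mul_meas_ge_le_integral_of_nonneg hc0 hc s

namespace AddCircle

variable {p : ℝ}

theorem dist_coe_le_abs_sub (u v : ℝ) : dist (u : AddCircle p) v ≤ |u - v| := by
  rw [dist_eq_norm, ← QuotientAddGroup.mk_sub]
  exact QuotientAddGroup.norm_mk_le_norm

theorem mem_ball_union_ball_of_mem_image_Ico_of_notMem {a b r : ℝ} {y z : AddCircle p}
    (hy : y ∈ ((↑) : ℝ → AddCircle p) '' Ico a b) (hz : z ∉ ((↑) : ℝ → AddCircle p) '' Ico a b)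
    (hzy : dist z y < r) : y ∈ ball (a : AddCircle p) r ∪ ball (b : AddCircle p) r := by
  obtain ⟨u, hu, rfl⟩ := hy
  rw [dist_eq_norm] at hzy
  obtain ⟨m, hm, hmr⟩ := QuotientAddGroup.norm_lt_iff.mp hzy
  rw [Real.norm_eq_abs] at hmr
  have hv : ((u + m : ℝ) : AddCircle p) = z := by
    rw [QuotientAddGroup.mk_add, hm, add_sub_cancel]
  have hvJ : u + m ∉ Ico a b := fun h => hz ⟨u + m, h, hv⟩
  simp only [mem_Ico, not_and_or, not_le, not_lt] at hvJ
  rcases hvJ with hva | hvb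
  · left
    rw [mem_ball]
    refine (dist_coe_le_abs_sub u a).trans_lt ?_
    rw [abs_of_nonneg (by linarith [hu.1])]
    linarith [neg_abs_le m]
  · right
    rw [mem_ball]
    refine (dist_coe_le_abs_sub u b).trans_lt ?_
    rw [abs_of_nonpos (by linarith [hu.2])]
    linarith [le_abs_self m, hu.1]

variable [Fact (0 < p)]

theorem volume_real_closedBall_le (x : AddCircle p) {r : ℝ} (hr : 0 ≤ r) :
    volume.real (closedBall x r) ≤ 2 * r := by
  rw [measureReal_def, volume_closedBall, ENNReal.toReal_ofReal
    (le_min (Fact.out : 0 < p).le (by linarith))]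
  exact min_le_right _ _

theorem volume_real_image_Ico_le {a b : ℝ} (hab : a ≤ b) :
    volume.real (((↑) : ℝ → AddCircle p) '' Ico a b) ≤ b - a := by
  have hsub : ((↑) : ℝ → AddCircle p) '' Ico a b ⊆
      closedBall (((a + b) / 2 : ℝ) : AddCircle p) ((b - a) / 2) := by
    rintro _ ⟨u, hu, rfl⟩
    refine mem_closedBall.mpr ((dist_coe_le_abs_sub _ _).trans (abs_le.mpr ⟨?_, ?_⟩)) <;>
      linarith [hu.1, hu.2]
  calc _ ≤ volume.real (closedBall (((a + b) / 2 : ℝ) : AddCircle p) ((b - a) / 2)) :=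
        measureReal_mono hsub
    _ ≤ 2 * ((b - a) / 2) := volume_real_closedBall_le _ (by linarith)
    _ = b - a := by ring

theorem mul_sub_le_setIntegral_dist {μ : Measure (AddCircle p)} [IsFiniteMeasure μ]
    {T : AddCircle p → AddCircle p} (hT : Measurable T) {M : ℝ} (hM : 0 ≤ M)
    (hμ : ∀ t, μ.real t ≤ M * volume.real t) (a b : ℝ) {s : ℝ} (hs : 0 ≤ s) :
    s * (μ.real (((↑) : ℝ → AddCircle p) '' Ico a b) -
        μ.real (T ⁻¹' (((↑) : ℝ → AddCircle p) '' Ico a b)) - 4 * M * s) ≤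
      ∫ y in ((↑) : ℝ → AddCircle p) '' Ico a b, dist (T y) y ∂μ := by
  have hc : Integrable (fun y => dist (T y) y) μ :=
    Integrable.of_bound (hT.dist measurable_id).aestronglyMeasurable (p / 2) <|
      ae_of_all _ fun y => by
        simpa [dist_eq_norm, abs_of_pos (Fact.out : 0 < p)] using
          norm_le_half_period p (Fact.out : 0 < p).ne' (x := T y - y)
  have hball (x : AddCircle p) : μ.real (ball x s) ≤ M * (2 * s) := (hμ _).trans <| by
    gcongr
    exact (measureReal_mono ball_subset_closedBall).trans (volume_real_closedBall_le x hs)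
  have hB : μ.real (ball (a : AddCircle p) s ∪ ball (b : AddCircle p) s) ≤ 4 * M * s :=
    (measureReal_union_le _ _).trans (by linarith [hball (a : AddCircle p), hball (b : AddCircle p)])
  calc _ ≤ s * (μ.real (((↑) : ℝ → AddCircle p) '' Ico a b) -
        μ.real (T ⁻¹' (((↑) : ℝ → AddCircle p) '' Ico a b)) -
          μ.real (ball (a : AddCircle p) s ∪ ball (b : AddCircle p) s)) := by gcongr
    _ ≤ _ := mul_measureReal_sub_preimage_sub_le_setIntegral hs (ae_of_all _ fun _ => dist_nonneg)
        hc.integrableOn fun _ hy hTy => mem_ball_union_ball_of_mem_image_Ico_of_notMem hy hTy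

end AddCircle

/-- Local mass-excess lower bound (key step of Theorem 2): there is an absolute
constant `c > 0` such that if `f : 𝕋 → ℝ` is continuous, `f ≥ 0`, not identically
zero, with mean `f̄`, and `T : 𝕋 → 𝕋` is a measurable map pushing `f dx` forward to
`f̄ dx`, then for every arc `J` (the image of a real interval `[a,b)` with `b ≤ a+1`)
carrying mass at least `f̄ |J|`, one has
`∫_J |T(y) - y| f(y) dy ≥ c (∫_J f - f̄ |J|)² / ‖f‖_∞`. -/
theorem stmt19 : ∃ c : ℝ, 0 < c ∧
    ∀ f : UnitAddCircle → ℝ, Continuous f → (∀ x, 0 ≤ f x) → (∃ x, f x ≠ 0) →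
    ∀ T : UnitAddCircle → UnitAddCircle, Measurable T →
      (volume.withDensity fun x => ENNReal.ofReal (f x)).map T =
        volume.withDensity (fun _ => ENNReal.ofReal (∫ x, f x)) →
    ∀ a b : ℝ, a ≤ b → b ≤ a + 1 →
      (∫ x, f x) * (b - a) ≤
        (∫ y in (fun x : ℝ => (x : UnitAddCircle)) '' Set.Ico a b, f y) →
      c * ((∫ y in (fun x : ℝ => (x : UnitAddCircle)) '' Set.Ico a b, f y) -
            (∫ x, f x) * (b - a)) ^ 2 / (⨆ x, |f x|) ≤
        ∫ y in (fun x : ℝ => (x : UnitAddCircle)) '' Set.Ico a b, dist (T y) y * f y := by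
  refine ⟨1 / 16, by norm_num, ?_⟩
  intro f hf hf0 _ T hT hpush a b hab _ hmass
  set M := ⨆ x, |f x|
  set E := (∫ y in (fun x : ℝ => (x : UnitAddCircle)) '' Set.Ico a b, f y) - (∫ x, f x) * (b - a)
  rcases le_or_gt M 0 with hM | hM
  · exact (div_nonpos_of_nonneg_of_nonpos (by positivity) hM).trans
      (integral_nonneg fun y => mul_nonneg dist_nonneg (hf0 y))
  have hfM (x : UnitAddCircle) : f x ≤ M :=
    (le_abs_self _).trans (le_ciSup (isCompact_range (continuous_abs.comp hf)).bddAbove x)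
  have hfi : Integrable f := hf.integrable_of_hasCompactSupport (.of_compactSpace f)
  have := isFiniteMeasure_withDensity_ofReal hfi.hasFiniteIntegral
  have hs : 0 ≤ E / (8 * M) := div_nonneg (by linarith) (by linarith)
  have key := AddCircle.mul_sub_le_setIntegral_dist hT hM.le
    (measureReal_withDensity_ofReal_le hM.le hfM) a b hs
  rw [measureReal_withDensity_ofReal hfi.integrableOn (ae_of_all _ hf0),
    setIntegral_withDensity_ofReal hf.measurable hf0] at key
  have hpre := (measureReal_preimage_le_of_map_eq_withDensity_const hT (integral_nonneg hf0)
    hpush _).trans (mul_le_mul_of_nonneg_left (AddCircle.volume_real_image_Ico_le hab)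
      (integral_nonneg hf0))
  calc 1 / 16 * E ^ 2 / M = E / (8 * M) * (E - 4 * M * (E / (8 * M))) := by field_simp; ring
    _ ≤ _ := by gcongr; linarith
    _ ≤ _ := key
end
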